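/- arXiv:2112.06859 — 2 statements merged into one kernel-verified Lean document; each statement's English description precedes it below -/
import Mathlib

section
/- For any Boolean algebra A, the space UV(A) of proper filters of A is sober: every completely prime filter of open sets of UV(A) is the collection of open neighborhoods of a unique point. -/
/-- A proper filter of a Boolean algebra. -/
structure PropFilter (A : Type*) [BooleanAlgebra A] where
  carrier : Set A
  upward : ∀ a b : A, a ∈ carrier → a ≤ b → b ∈ carrier
  inf_mem : ∀ a b : A, a ∈ carrier → b ∈ carrier → a ⊓ b ∈ carrier
  top_mem : (⊤ : A) ∈ carrier
  proper : (⊥ : A) ∉ carrier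

variable {A : Type*} [BooleanAlgebra A]

/-- The basic (sub)basis sets of `UV(A)`. -/
def hat (a : A) : Set (PropFilter A) := {F | a ∈ F.carrier}

/-- The upper Vietoris topology on the set of proper filters, generated by the sets `hat a`. -/
instance uvTop : TopologicalSpace (PropFilter A) :=
  TopologicalSpace.generateFrom {S | ∃ a : A, S = hat a}

lemma hat_inf (a b : A) : hat (a ⊓ b) = hat a ∩ hat b := by
  ext F
  simp only [hat, Set.mem_setOf_eq, Set.mem_inter_iff]
  constructor
  · intro h
    exact ⟨F.upward _ _ h inf_le_left, F.upward _ _ h inf_le_right⟩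
  · intro ⟨h1, h2⟩
    exact F.inf_mem _ _ h1 h2

lemma PropFilter.ext' {F G : PropFilter A} (h : F.carrier = G.carrier) : F = G := by
  cases F; cases G; simpa using h

lemma hat_basis : TopologicalSpace.IsTopologicalBasis {S : Set (PropFilter A) | ∃ a : A, S = hat a} := by
  refine TopologicalSpace.IsTopologicalBasis.mk ?_ ?_ rfl
  · rintro t1 ⟨a, rfl⟩ t2 ⟨b, rfl⟩ x hx
    exact ⟨hat (a ⊓ b), ⟨a ⊓ b, rfl⟩, by rw [hat_inf]; exact hx, by rw [hat_inf]⟩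
  · apply Set.eq_univ_of_univ_subset
    intro F _
    exact Set.mem_sUnion.mpr ⟨hat ⊤, ⟨⊤, rfl⟩, F.top_mem⟩

theorem stmt7 (𝓕 : Set (Set (PropFilter A)))
    (hopen : ∀ U ∈ 𝓕, IsOpen U)
    (hup : ∀ U V : Set (PropFilter A), U ∈ 𝓕 → IsOpen V → U ⊆ V → V ∈ 𝓕)
    (hinter : ∀ U V : Set (PropFilter A), U ∈ 𝓕 → V ∈ 𝓕 → U ∩ V ∈ 𝓕)
    (huniv : Set.univ ∈ 𝓕)
    (hproper : ∅ ∉ 𝓕)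
    (hprime : ∀ 𝒮 : Set (Set (PropFilter A)), (∀ U ∈ 𝒮, IsOpen U) → ⋃₀ 𝒮 ∈ 𝓕 →
      ∃ U ∈ 𝒮, U ∈ 𝓕) :
    ∃! F : PropFilter A, 𝓕 = {U : Set (PropFilter A) | IsOpen U ∧ F ∈ U} := by
  have hat_open : ∀ a : A, IsOpen (hat a) := fun a =>
    TopologicalSpace.isOpen_generateFrom_of_mem ⟨a, rfl⟩
  -- the candidate point
  have hat_top : (hat (⊤ : A) : Set (PropFilter A)) = Set.univ := by
    ext F; simp [hat, F.top_mem]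
  have hat_bot : (hat (⊥ : A) : Set (PropFilter A)) = ∅ := by
    ext F; simp [hat, F.proper]
  set F : PropFilter A :=
    { carrier := {a : A | hat a ∈ 𝓕}
      upward := by
        intro a b ha hab
        exact hup _ _ ha (hat_open b) (fun G hG => G.upward _ _ hG hab)
      inf_mem := by
        intro a b ha hb
        show hat (a ⊓ b) ∈ 𝓕
        rw [hat_inf]; exact hinter _ _ ha hb
      top_mem := by show hat (⊤:A) ∈ 𝓕; rw [hat_top]; exact huniv
      proper := by show hat (⊥:A) ∉ 𝓕; rw [hat_bot]; exact hproper } with hF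
  have key : ∀ U : Set (PropFilter A), U ∈ 𝓕 ↔ (IsOpen U ∧ F ∈ U) := by
    intro U
    constructor
    · intro hU
      refine ⟨hopen U hU, ?_⟩
      -- U is a union of hats contained in it
      have hUeq : U = ⋃₀ {S | (∃ a : A, S = hat a) ∧ S ⊆ U} := by
        apply Set.Subset.antisymm
        · intro x hx
          obtain ⟨S, hS, hxS, hSU⟩ :=
            hat_basis.exists_subset_of_mem_open hx (hopen U hU)
          exact ⟨S, ⟨hS, hSU⟩, hxS⟩
        · intro x ⟨S, ⟨_, hSU⟩, hxS⟩
          exact hSU hxS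
      obtain ⟨S, ⟨⟨a, rfl⟩, hSU⟩, hSF⟩ := hprime _
        (by rintro S ⟨⟨a, rfl⟩, _⟩; exact hat_open a) (hUeq ▸ hU)
      exact hSU hSF
    · rintro ⟨hUopen, hFU⟩
      obtain ⟨S, ⟨a, rfl⟩, hFS, hSU⟩ := hat_basis.exists_subset_of_mem_open hFU hUopen
      exact hup _ _ hFS hUopen hSU
  refine ⟨F, Set.ext key, ?_⟩
  intro G hG
  have hcar : G.carrier = F.carrier := by
    ext a
    have : hat a ∈ 𝓕 ↔ IsOpen (hat a) ∧ G ∈ hat a := by rw [hG]; rfl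
    simp only [hat, Set.mem_setOf_eq] at this
    constructor
    · intro ha
      exact this.mpr ⟨hat_open a, ha⟩
    · intro ha
      exact (this.mp ha).2
  exact PropFilter.ext' hcar
end

section
/- Let A be a Boolean algebra and I an ideal of A. Then ζ(I) = ⋃{â | a ∈ I} is a regular open set in the upset topology of the poset of proper filters of A ordered by inclusion, and the map I ↦ ζ(I) is injective and order-preserving on ideals. -/
variable {A : Type*} [BooleanAlgebra A]

/-- The open regular-open set of proper filters associated to an ideal. -/
def zeta (I : Order.Ideal A) : Set (PropFilter A) := {F | ∃ a ∈ F.carrier, a ∈ I}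

/-- The filter generated by a proper filter together with complements of ideal elements. -/
def extFilter (F : PropFilter A) (I : Order.Ideal A)
    (h : ∀ a ∈ F.carrier, a ∉ I) : PropFilter A where
  carrier := {b | ∃ f ∈ F.carrier, ∃ a ∈ I, f ⊓ aᶜ ≤ b}
  upward := by
    rintro b c ⟨f, hf, a, ha, hle⟩ hbc
    exact ⟨f, hf, a, ha, hle.trans hbc⟩
  inf_mem := by
    rintro b c ⟨f1, hf1, a1, ha1, h1⟩ ⟨f2, hf2, a2, ha2, h2⟩
    refine ⟨f1 ⊓ f2, F.inf_mem _ _ hf1 hf2, a1 ⊔ a2, Order.Ideal.sup_mem ha1 ha2, ?_⟩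
    rw [compl_sup]
    refine le_inf ?_ ?_
    · exact le_trans (by exact inf_le_inf (inf_le_left) (inf_le_left)) h1
    · exact le_trans (by exact inf_le_inf (inf_le_right) (inf_le_right)) h2
  top_mem := ⟨⊤, F.top_mem, ⊥, I.bot_mem, le_top⟩
  proper := by
    rintro ⟨f, hf, a, ha, hle⟩
    have : f ≤ a := by
      have : f ⊓ aᶜ = ⊥ := le_bot_iff.mp hle
      rwa [← sdiff_eq, sdiff_eq_bot_iff] at this
    exact h f hf (I.lower this ha)

lemma zeta_inj_aux {I J : Order.Ideal A} (h : zeta I = zeta J) : I ≤ J := by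
  intro a ha
  by_cases hbot : a = ⊥
  · rw [hbot]; exact J.bot_mem
  · have hFa : ∃ b, a ≤ b ∧ b ∈ J := by
      let Fa : PropFilter A :=
        { carrier := {b | a ≤ b}
          upward := fun x y hx hxy => hx.trans hxy
          inf_mem := fun x y hx hy => le_inf hx hy
          top_mem := le_top
          proper := fun hb => hbot (le_bot_iff.mp hb) }
      have : Fa ∈ zeta I := ⟨a, le_refl a, ha⟩
      rw [h] at this
      obtain ⟨b, hb, hbJ⟩ := this
      exact ⟨b, hb, hbJ⟩
    obtain ⟨b, hab, hbJ⟩ := hFa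
    exact J.lower hab hbJ

theorem stmt18 :
    (∀ I : Order.Ideal A,
      (∀ F G : PropFilter A, F ∈ zeta I → F.carrier ⊆ G.carrier → G ∈ zeta I) ∧
      (∀ F : PropFilter A,
        (∀ F' : PropFilter A, F.carrier ⊆ F'.carrier →
          ∃ F'' : PropFilter A, F'.carrier ⊆ F''.carrier ∧ F'' ∈ zeta I) → F ∈ zeta I)) ∧
    Function.Injective (zeta (A := A)) ∧
    (∀ I J : Order.Ideal A, I ≤ J → zeta I ⊆ zeta J) := by
  refine ⟨fun I => ⟨?_, ?_⟩, ?_, ?_⟩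
  · rintro F G ⟨a, haF, haI⟩ hsub
    exact ⟨a, hsub haF, haI⟩
  · intro F hF
    by_contra hFz
    have hno : ∀ a ∈ F.carrier, a ∉ I := by
      intro a ha haI
      exact hFz ⟨a, ha, haI⟩
    set F' := extFilter F I hno with hF'
    have hsub : F.carrier ⊆ F'.carrier := by
      intro b hb
      exact ⟨b, hb, ⊥, I.bot_mem, by simp⟩
    obtain ⟨F'', hsub'', a, haF'', haI⟩ := hF F' hsub
    have hac : aᶜ ∈ F''.carrier :=
      hsub'' ⟨⊤, F.top_mem, a, haI, by simp⟩
    have : (⊥ : A) ∈ F''.carrier := by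
      have := F''.inf_mem a aᶜ haF'' hac
      simpa using this
    exact F''.proper this
  · intro I J hIJ
    exact le_antisymm (zeta_inj_aux hIJ) (zeta_inj_aux hIJ.symm)
  · rintro I J hIJ F ⟨a, haF, haI⟩
    exact ⟨a, haF, hIJ haI⟩
end
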